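/- Let h solve the height system with Bernoulli constant r, let s > s₀, set w = h − H(·;s) and Φ = Φ^{(s)}. Then for all (q,p) ∈ S the vector-field identity (Φ_p, −Φ_q) · (w_q, w_p) = −( w_p²/(h_p² H_p) + w_q² H_p/h_p² ) w_q holds; in particular, wherever w_q > 0 this scalar product is strictly negative. -/

import Mathlib

open MeasureTheory Set Filter

noncomputable section

/-- `Omeg ω p = ∫₀^p ω(t) dt`, the primitive of the vorticity function. -/
def Omeg (ω : ℝ → ℝ) (p : ℝ) : ℝ := ∫ t in (0:ℝ)..p, ω t

/-- `s0 ω = sqrt (max_{p ∈ [0,1]} 2 Ω(p))`. -/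
def s0 (ω : ℝ → ℝ) : ℝ := Real.sqrt (sSup ((fun p => 2 * Omeg ω p) '' Icc (0:ℝ) 1))

/-- `Hp ω p s = (s² − 2Ω(p))^{-1/2}`. -/
def Hp (ω : ℝ → ℝ) (p s : ℝ) : ℝ := (Real.sqrt (s ^ 2 - 2 * Omeg ω p))⁻¹

/-- `Hfun ω p s = H(p; s) = ∫₀^p (s² − 2Ω(τ))^{-1/2} dτ`. -/
def Hfun (ω : ℝ → ℝ) (p s : ℝ) : ℝ := ∫ τ in (0:ℝ)..p, Hp ω τ s

/-- `dd ω s = d(s) = H(1; s)`. -/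
def dd (ω : ℝ → ℝ) (s : ℝ) : ℝ := Hfun ω 1 s

/-- `RR ω s = R(s) = s²/2 − Ω(1) + d(s)`, the Bernoulli constant of the stream solution. -/
def RR (ω : ℝ → ℝ) (s : ℝ) : ℝ := s ^ 2 / 2 - Omeg ω 1 + dd ω s

/-- `sigmaFun ω s r = σ(s; r)`. -/
def sigmaFun (ω : ℝ → ℝ) (s r : ℝ) : ℝ :=
  ∫ p in (0:ℝ)..1,
    (1 / (2 * (Hp ω p s) ^ 2) - Hfun ω p s - Omeg ω p + Omeg ω 1 + r) * Hp ω p s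

/-- Partial derivative in the first (horizontal) variable `q`. -/
def dq (f : ℝ → ℝ → ℝ) (q p : ℝ) : ℝ := deriv (fun x => f x p) q

/-- Partial derivative in the second (vertical) variable `p`. -/
def dp (f : ℝ → ℝ → ℝ) (q p : ℝ) : ℝ := deriv (fun y => f q y) p

/-- The height system with Bernoulli constant `r` on the strip `S = ℝ × [0,1]`. -/
structure HeightSol (ω : ℝ → ℝ) (r : ℝ) (h : ℝ → ℝ → ℝ) : Prop where
  smooth : ContDiff ℝ 2 (Function.uncurry h)
  hp_pos : ∀ q : ℝ, ∀ p ∈ Icc (0:ℝ) 1, 0 < dp h q p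
  pde : ∀ q : ℝ, ∀ p ∈ Icc (0:ℝ) 1,
    (1 + (dq h q p) ^ 2) / (dp h q p) ^ 2 * dp (dp h) q p
      - 2 * (dq h q p) / (dp h q p) * dp (dq h) q p
      + dq (dq h) q p - ω p * dp h q p = 0
  top : ∀ q : ℝ, (1 + (dq h q 1) ^ 2) / (2 * (dp h q 1) ^ 2) + h q 1 = r
  bot : ∀ q : ℝ, h q 0 = 0

/-- The flow force of a height function `h`, computed on the vertical line through `q`. -/
def flowForce (ω : ℝ → ℝ) (r : ℝ) (h : ℝ → ℝ → ℝ) (q : ℝ) : ℝ :=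
  ∫ p in (0:ℝ)..1,
    ((1 - (dq h q p) ^ 2) / (2 * (dp h q p) ^ 2) - h q p - Omeg ω p + Omeg ω 1 + r) * dp h q p

/-- `wfun ω s h = w^{(s)} = h − H(·; s)`. -/
def wfun (ω : ℝ → ℝ) (s : ℝ) (h : ℝ → ℝ → ℝ) (q p : ℝ) : ℝ := h q p - Hfun ω p s

/-- The flow force flux function `Φ^{(s)}`. -/
def Phi (ω : ℝ → ℝ) (s : ℝ) (h : ℝ → ℝ → ℝ) (q p : ℝ) : ℝ :=
  ∫ p' in (0:ℝ)..p,
    ((dp (wfun ω s h) q p') ^ 2 / (dp h q p' * (Hp ω p' s) ^ 2)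
      - (dq (wfun ω s h) q p') ^ 2 / dp h q p')

/-- `h ∈ C^{2,γ}(S̄)`: `h` is twice continuously differentiable, all partial derivatives of
order ≤ 2 are bounded on the strip, and the second-order derivatives are uniformly
γ-Hölder continuous on the strip. -/
def C2Holder (γ : ℝ) (h : ℝ → ℝ → ℝ) : Prop :=
  ContDiff ℝ 2 (Function.uncurry h) ∧
  (∀ g ∈ ([h, dq h, dp h, dq (dq h), dp (dq h), dp (dp h)] : List (ℝ → ℝ → ℝ)),
    ∃ M : ℝ, ∀ q : ℝ, ∀ p ∈ Icc (0:ℝ) 1, |g q p| ≤ M) ∧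
  (∀ g ∈ ([dq (dq h), dp (dq h), dp (dp h)] : List (ℝ → ℝ → ℝ)),
    ∃ C : ℝ, ∀ q q' : ℝ, ∀ p ∈ Icc (0:ℝ) 1, ∀ p' ∈ Icc (0:ℝ) 1,
      |g q p - g q' p'| ≤ C * Real.sqrt ((q - q') ^ 2 + (p - p') ^ 2) ^ γ)

end

/-!
The integrand of `Φ` is `Φ_p`, and the height equation is equivalent to the conservation law
`∂_q Φ_p = ∂_p G` with `G = h_q / H_p² − h_q (1 + h_q²) / h_p²`. Since `h = 0` on `p = 0`, `G`
vanishes there, so differentiating under the integral gives `Φ_q = G`. As `w_q = h_q` and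
`w_p = h_p − H_p`, the identity is then algebra, and its right-hand side is `−(positive) · w_q`.
-/

open Function

section PartialDerivatives

variable {f : ℝ → ℝ → ℝ} {q p : ℝ}

lemma hasDerivAt_fderiv_fst (hf : DifferentiableAt ℝ (uncurry f) (q, p)) :
    HasDerivAt (fun x => f x p) (fderiv ℝ (uncurry f) (q, p) (1, 0)) q :=
  hf.hasFDerivAt.comp_hasDerivAt (f := fun x => (x, p)) q
    ((hasDerivAt_id q).prodMk (hasDerivAt_const q p))

lemma hasDerivAt_fderiv_snd (hf : DifferentiableAt ℝ (uncurry f) (q, p)) :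
    HasDerivAt (fun y => f q y) (fderiv ℝ (uncurry f) (q, p) (0, 1)) p :=
  hf.hasFDerivAt.comp_hasDerivAt (f := fun y => (q, y)) p
    ((hasDerivAt_const p q).prodMk (hasDerivAt_id p))

lemma hasDerivAt_dq (hf : DifferentiableAt ℝ (uncurry f) (q, p)) :
    HasDerivAt (fun x => f x p) (dq f q p) q :=
  (hasDerivAt_fderiv_fst hf).differentiableAt.hasDerivAt

lemma hasDerivAt_dp (hf : DifferentiableAt ℝ (uncurry f) (q, p)) :
    HasDerivAt (fun y => f q y) (dp f q p) p :=
  (hasDerivAt_fderiv_snd hf).differentiableAt.hasDerivAt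

lemma uncurry_dq (hf : Differentiable ℝ (uncurry f)) :
    uncurry (dq f) = fun z => fderiv ℝ (uncurry f) z (1, 0) := by
  ext ⟨q, p⟩
  exact (hasDerivAt_fderiv_fst (hf _)).deriv

lemma uncurry_dp (hf : Differentiable ℝ (uncurry f)) :
    uncurry (dp f) = fun z => fderiv ℝ (uncurry f) z (0, 1) := by
  ext ⟨q, p⟩
  exact (hasDerivAt_fderiv_snd (hf _)).deriv

variable {m n : WithTop ℕ∞}

lemma contDiff_uncurry_dq (hf : ContDiff ℝ n (uncurry f)) (hmn : m + 1 ≤ n) :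
    ContDiff ℝ m (uncurry (dq f)) := by
  rw [uncurry_dq (hf.differentiable (by rintro rfl; simp at hmn))]
  exact (hf.fderiv_right hmn).clm_apply contDiff_const

lemma contDiff_uncurry_dp (hf : ContDiff ℝ n (uncurry f)) (hmn : m + 1 ≤ n) :
    ContDiff ℝ m (uncurry (dp f)) := by
  rw [uncurry_dp (hf.differentiable (by rintro rfl; simp at hmn))]
  exact (hf.fderiv_right hmn).clm_apply contDiff_const

lemma dp_dq_eq_dq_dp (hf : ContDiff ℝ 2 (uncurry f)) : dp (dq f) = dq (dp f) := by
  have hf1 : Differentiable ℝ (uncurry f) := hf.differentiable two_ne_zero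
  have hd : Differentiable ℝ (fderiv ℝ (uncurry f)) :=
    (hf.fderiv_right (m := 1) le_rfl).differentiable one_ne_zero
  ext q p
  have hsymm := (hf.contDiffAt (x := (q, p))).isSymmSndFDerivAt (by simp)
  rw [← uncurry_apply_pair (dp _), ← uncurry_apply_pair (dq (dp f)),
    uncurry_dp ((contDiff_uncurry_dq hf (m := 1) le_rfl).differentiable one_ne_zero),
    uncurry_dq ((contDiff_uncurry_dp hf (m := 1) le_rfl).differentiable one_ne_zero),
    uncurry_dq hf1, uncurry_dp hf1]
  dsimp only
  rw [fderiv_clm_apply (hd _) (differentiableAt_const _),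
    fderiv_clm_apply (hd _) (differentiableAt_const _)]
  simpa using hsymm (0, 1) (1, 0)

end PartialDerivatives

section IntervalIntegral

lemma hasDerivAt_integral_of_continuousOn {f : ℝ → ℝ} {V : Set ℝ} {a b : ℝ} (hV : IsOpen V)
    (hf : ContinuousOn f V) (hab : uIcc a b ⊆ V) :
    HasDerivAt (fun y => ∫ t in a..y, f t) (f b) b :=
  intervalIntegral.integral_hasDerivAt_right (hf.mono hab).intervalIntegrable
    (hf.stronglyMeasurableAtFilter hV b (hab right_mem_uIcc))
    (hf.continuousAt (hV.mem_nhds (hab right_mem_uIcc)))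

lemma isOpen_setOf_uIcc_subset {V : Set ℝ} (hV : IsOpen V) (a : ℝ) :
    IsOpen {b | uIcc a b ⊆ V} := by
  refine isOpen_iff_mem_nhds.2 fun b hb => ?_
  obtain ⟨ε, hε, hball⟩ := Metric.isOpen_iff.1 hV b (hb right_mem_uIcc)
  filter_upwards [Metric.ball_mem_nhds b hε] with t ht
  refine uIcc_subset_uIcc_union_uIcc.trans (union_subset hb (hball.trans' ?_))
  rw [Real.ball_eq_Ioo] at ht ⊢
  exact ordConnected_Ioo.uIcc_subset ⟨by linarith, by linarith⟩ ht

lemma hasDerivAt_intervalIntegral_of_continuousOn_deriv {F F' : ℝ → ℝ → ℝ} {a b x₀ : ℝ}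
    (hF : ∀ x, ContinuousOn (F x) (uIcc a b))
    (hF' : ContinuousOn (uncurry F') (univ ×ˢ uIcc a b))
    (hderiv : ∀ x, ∀ t ∈ uIcc a b, HasDerivAt (fun x => F x t) (F' x t) x) :
    HasDerivAt (fun x => ∫ t in a..b, F x t) (∫ t in a..b, F' x₀ t) x₀ := by
  obtain ⟨C, hC⟩ := ((isCompact_closedBall x₀ 1).prod isCompact_uIcc).exists_bound_of_continuousOn
    (hF'.mono (prod_mono (subset_univ _) subset_rfl))
  have hmeas : ∀ x, AEStronglyMeasurable (F x) (volume.restrict (uIoc a b)) := fun x =>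
    ((hF x).mono uIoc_subset_uIcc).aestronglyMeasurable measurableSet_uIoc
  have hF'x₀ : ContinuousOn (F' x₀) (uIcc a b) :=
    hF'.comp (Continuous.prodMk_right x₀).continuousOn fun t ht => ⟨mem_univ _, ht⟩
  exact (intervalIntegral.hasDerivAt_integral_of_dominated_loc_of_deriv_le
    (bound := fun _ => C) (Metric.ball_mem_nhds x₀ one_pos) (Eventually.of_forall hmeas)
    (hF x₀).intervalIntegrable
    ((hF'x₀.mono uIoc_subset_uIcc).aestronglyMeasurable measurableSet_uIoc)
    (Eventually.of_forall fun t ht x hx =>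
      hC (x, t) ⟨Metric.ball_subset_closedBall hx, uIoc_subset_uIcc ht⟩)
    intervalIntegrable_const
    (Eventually.of_forall fun t ht x _ => hderiv x t (uIoc_subset_uIcc ht))).2

end IntervalIntegral

section StreamSolution

variable {ω : ℝ → ℝ} {s t : ℝ}

lemma hasDerivAt_Omeg (hω : Continuous ω) (t : ℝ) : HasDerivAt (Omeg ω) (ω t) t :=
  hasDerivAt_integral_of_continuousOn isOpen_univ hω.continuousOn (subset_univ _)

lemma continuous_Omeg (hω : Continuous ω) : Continuous (Omeg ω) :=
  continuous_iff_continuousAt.2 fun t => (hasDerivAt_Omeg hω t).continuousAt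

lemma continuous_sq_sub_two_Omeg (hω : Continuous ω) :
    Continuous fun t => s ^ 2 - 2 * Omeg ω t :=
  continuous_const.sub (continuous_const.mul (continuous_Omeg hω))

lemma sq_sub_two_Omeg_pos (hω : Continuous ω) (hs : s0 ω < s) (ht : t ∈ Icc (0:ℝ) 1) :
    0 < s ^ 2 - 2 * Omeg ω t := by
  have hbdd : BddAbove ((fun p => 2 * Omeg ω p) '' Icc (0:ℝ) 1) :=
    (isCompact_Icc.image (continuous_const.mul (continuous_Omeg hω))).bddAbove
  have hle := le_csSup hbdd (mem_image_of_mem _ ht)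
  have hlt := (Real.sqrt_lt' ((Real.sqrt_nonneg _).trans_lt hs)).1 hs
  linarith

/-- An open neighbourhood of `[0, 1]` on which `H(·; s)` is differentiable: `dp` is a two-sided
derivative, also at `p = 0` and `p = 1`. -/
def Hdomain (ω : ℝ → ℝ) (s : ℝ) : Set ℝ := {b | uIcc 0 b ⊆ {t | 0 < s ^ 2 - 2 * Omeg ω t}}

lemma isOpen_Hdomain (hω : Continuous ω) : IsOpen (Hdomain ω s) :=
  isOpen_setOf_uIcc_subset (isOpen_lt continuous_const (continuous_sq_sub_two_Omeg hω)) 0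

lemma Icc_subset_Hdomain (hω : Continuous ω) (hs : s0 ω < s) : Icc (0:ℝ) 1 ⊆ Hdomain ω s :=
  fun _ ht _ hτ => sq_sub_two_Omeg_pos hω hs
    (Icc_subset_Icc_right ht.2 (uIcc_of_le ht.1 ▸ hτ))

lemma sq_sub_two_Omeg_pos_of_mem_Hdomain (ht : t ∈ Hdomain ω s) :
    0 < s ^ 2 - 2 * Omeg ω t :=
  ht right_mem_uIcc

lemma Hp_pos (ht : 0 < s ^ 2 - 2 * Omeg ω t) : 0 < Hp ω t s :=
  inv_pos.2 (Real.sqrt_pos.2 ht)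

lemma Hp_sq (ht : 0 ≤ s ^ 2 - 2 * Omeg ω t) : Hp ω t s ^ 2 = (s ^ 2 - 2 * Omeg ω t)⁻¹ := by
  rw [Hp, inv_pow, Real.sq_sqrt ht]

lemma continuousOn_Hp (hω : Continuous ω) :
    ContinuousOn (fun t => Hp ω t s) {t | 0 < s ^ 2 - 2 * Omeg ω t} :=
  (continuous_sq_sub_two_Omeg hω).sqrt.continuousOn.inv₀
    fun _ ht => (Real.sqrt_pos.2 ht).ne'

lemma hasDerivAt_Hfun (hω : Continuous ω) (ht : t ∈ Hdomain ω s) :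
    HasDerivAt (fun y => Hfun ω y s) (Hp ω t s) t :=
  hasDerivAt_integral_of_continuousOn (isOpen_lt continuous_const (continuous_sq_sub_two_Omeg hω))
    (continuousOn_Hp hω) ht

end StreamSolution

noncomputable section

def phiP (ω : ℝ → ℝ) (s : ℝ) (h : ℝ → ℝ → ℝ) (q p : ℝ) : ℝ :=
  (dp (wfun ω s h) q p) ^ 2 / (dp h q p * (Hp ω p s) ^ 2) - (dq (wfun ω s h) q p) ^ 2 / dp h q p

/-- The height equation is the conservation law `∂_p phiQ = ∂_q phiP` (both equal `phiPQ`), which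
makes `phiQ` the `q`-derivative of `Φ`. -/
def phiQ (ω : ℝ → ℝ) (s : ℝ) (h : ℝ → ℝ → ℝ) (q p : ℝ) : ℝ :=
  dq h q p * (s ^ 2 - 2 * Omeg ω p) - dq h q p * (1 + dq h q p ^ 2) / dp h q p ^ 2

def phiPQ (ω : ℝ → ℝ) (s : ℝ) (h : ℝ → ℝ → ℝ) (q p : ℝ) : ℝ :=
  dq (dp h) q p * (s ^ 2 - 2 * Omeg ω p)
    - (2 * dq h q p * dq (dq h) q p * dp h q p + (1 - dq h q p ^ 2) * dq (dp h) q p)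
      / dp h q p ^ 2

end

lemma dq_wfun (ω : ℝ → ℝ) (s : ℝ) (h : ℝ → ℝ → ℝ) : dq (wfun ω s h) = dq h := by
  ext q p
  exact deriv_sub_const _

namespace HeightSol

variable {ω : ℝ → ℝ} {r s : ℝ} {h : ℝ → ℝ → ℝ}

lemma differentiable (hsol : HeightSol ω r h) : Differentiable ℝ (uncurry h) :=
  hsol.smooth.differentiable two_ne_zero

lemma differentiable_dq (hsol : HeightSol ω r h) : Differentiable ℝ (uncurry (dq h)) :=
  (contDiff_uncurry_dq hsol.smooth (m := 1) le_rfl).differentiable one_ne_zero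

lemma differentiable_dp (hsol : HeightSol ω r h) : Differentiable ℝ (uncurry (dp h)) :=
  (contDiff_uncurry_dp hsol.smooth (m := 1) le_rfl).differentiable one_ne_zero

lemma dp_wfun (hsol : HeightSol ω r h) (hω : Continuous ω) {q t : ℝ} (ht : t ∈ Hdomain ω s) :
    dp (wfun ω s h) q t = dp h q t - Hp ω t s :=
  ((hasDerivAt_dp (hsol.differentiable _)).sub (hasDerivAt_Hfun hω ht)).deriv

lemma phiP_eq (hsol : HeightSol ω r h) (hω : Continuous ω) {q t : ℝ} (ht : t ∈ Hdomain ω s)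
    (hB : dp h q t ≠ 0) :
    phiP ω s h q t = dp h q t * (s ^ 2 - 2 * Omeg ω t) - 2 * (Hp ω t s)⁻¹
      + (1 - dq h q t ^ 2) / dp h q t := by
  have hg := sq_sub_two_Omeg_pos_of_mem_Hdomain ht
  rw [phiP, hsol.dp_wfun hω ht, dq_wfun, ← inv_inv (s ^ 2 - 2 * Omeg ω t), ← Hp_sq hg.le]
  have := (Hp_pos hg).ne'
  field_simp
  ring

lemma continuous_dq (hsol : HeightSol ω r h) : Continuous fun z : ℝ × ℝ => dq h z.1 z.2 :=
  hsol.differentiable_dq.continuous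

lemma continuous_dp (hsol : HeightSol ω r h) : Continuous fun z : ℝ × ℝ => dp h z.1 z.2 :=
  hsol.differentiable_dp.continuous

lemma continuous_dq_dq (hsol : HeightSol ω r h) :
    Continuous fun z : ℝ × ℝ => dq (dq h) z.1 z.2 :=
  (contDiff_uncurry_dq (contDiff_uncurry_dq hsol.smooth (m := 1) le_rfl) (m := 0) le_rfl).continuous

lemma continuous_dq_dp (hsol : HeightSol ω r h) :
    Continuous fun z : ℝ × ℝ => dq (dp h) z.1 z.2 :=
  (contDiff_uncurry_dq (contDiff_uncurry_dp hsol.smooth (m := 1) le_rfl) (m := 0) le_rfl).continuous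

lemma continuousOn_phiP (hsol : HeightSol ω r h) (hω : Continuous ω) (q : ℝ) :
    ContinuousOn (phiP ω s h q) (Hdomain ω s ∩ {t | dp h q t ≠ 0}) := by
  have hA : Continuous fun t => dq h q t := hsol.continuous_dq.comp (Continuous.prodMk_right q)
  have hB : Continuous fun t => dp h q t := hsol.continuous_dp.comp (Continuous.prodMk_right q)
  have hHp : ContinuousOn (fun t => (Hp ω t s)⁻¹) (Hdomain ω s ∩ {t | dp h q t ≠ 0}) :=
    ((continuousOn_Hp hω).mono fun t ht => sq_sub_two_Omeg_pos_of_mem_Hdomain ht.1).inv₀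
      fun t ht => (Hp_pos (sq_sub_two_Omeg_pos_of_mem_Hdomain ht.1)).ne'
  refine ContinuousOn.congr ?_ fun t ht => hsol.phiP_eq hω ht.1 ht.2
  exact ((hB.continuousOn.mul (continuous_sq_sub_two_Omeg hω).continuousOn).sub
    (continuousOn_const.mul hHp)).add
    ((continuousOn_const.sub (hA.continuousOn.pow 2)).div hB.continuousOn fun t ht => ht.2)

lemma dp_Phi (hsol : HeightSol ω r h) (hω : Continuous ω) (hs : s0 ω < s) {q p : ℝ}
    (hp : p ∈ Icc (0:ℝ) 1) : dp (Phi ω s h) q p = phiP ω s h q p := by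
  refine (hasDerivAt_integral_of_continuousOn ((isOpen_Hdomain hω).inter
    (isOpen_ne_fun (hsol.continuous_dp.comp (Continuous.prodMk_right q)) continuous_const))
    (hsol.continuousOn_phiP hω q) ?_).deriv
  rw [uIcc_of_le hp.1]
  exact fun t ht => ⟨Icc_subset_Hdomain hω hs (Icc_subset_Icc_right hp.2 ht),
    (hsol.hp_pos q t (Icc_subset_Icc_right hp.2 ht)).ne'⟩

lemma hasDerivAt_phiP_fst (hsol : HeightSol ω r h) (hω : Continuous ω) (hs : s0 ω < s) {t : ℝ}
    (ht : t ∈ Icc (0:ℝ) 1) (x : ℝ) :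
    HasDerivAt (fun x => phiP ω s h x t) (phiPQ ω s h x t) x := by
  have hB : ∀ x, dp h x t ≠ 0 := fun x => (hsol.hp_pos x t ht).ne'
  have hexpl : (fun x => phiP ω s h x t) = fun x => dp h x t * (s ^ 2 - 2 * Omeg ω t)
      - 2 * (Hp ω t s)⁻¹ + (1 - dq h x t ^ 2) / dp h x t :=
    funext fun x => hsol.phiP_eq hω (Icc_subset_Hdomain hω hs ht) (hB x)
  have hAx := hasDerivAt_dq (hsol.differentiable_dq (x, t))
  have hBx := hasDerivAt_dq (hsol.differentiable_dp (x, t))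
  rw [hexpl]
  refine (((hBx.mul_const (s ^ 2 - 2 * Omeg ω t)).sub_const (2 * (Hp ω t s)⁻¹)).add
    (((hAx.pow 2).const_sub 1).div hBx (hB x))).congr_deriv ?_
  unfold phiPQ
  simp only [Pi.pow_apply]
  field_simp
  ring

lemma hasDerivAt_phiQ_snd (hsol : HeightSol ω r h) (hω : Continuous ω) {t : ℝ}
    (ht : t ∈ Icc (0:ℝ) 1) (q : ℝ) :
    HasDerivAt (phiQ ω s h q) (phiPQ ω s h q t) t := by
  have hB := (hsol.hp_pos q t ht).ne'
  have hAy := hasDerivAt_dp (hsol.differentiable_dq (q, t))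
  have hBy := hasDerivAt_dp (hsol.differentiable_dp (q, t))
  have hg : HasDerivAt (fun y => s ^ 2 - 2 * Omeg ω y) (-(2 * ω t)) t := by
    simpa using ((hasDerivAt_Omeg hω t).const_mul 2).const_sub (s ^ 2)
  have hpde := hsol.pde q t ht
  refine ((hAy.mul hg).sub ((hAy.mul ((hAy.pow 2).const_add 1)).div (hBy.pow 2)
    (pow_ne_zero 2 hB))).congr_deriv ?_
  unfold phiPQ
  rw [← dp_dq_eq_dq_dp hsol.smooth]
  simp only [Pi.pow_apply, Pi.mul_apply]
  linear_combination (norm := skip) (2 * dq h q t / dp h q t) * hpde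
  field_simp
  ring

lemma continuousOn_phiPQ (hsol : HeightSol ω r h) (hω : Continuous ω) :
    ContinuousOn (uncurry (phiPQ ω s h)) (univ ×ˢ Icc (0:ℝ) 1) := by
  have hg : Continuous fun z : ℝ × ℝ => s ^ 2 - 2 * Omeg ω z.2 :=
    (continuous_sq_sub_two_Omeg hω).comp continuous_snd
  refine ((hsol.continuous_dq_dp.mul hg).continuousOn).sub (ContinuousOn.div ?_ ?_ ?_)
  · exact ((continuous_const.mul hsol.continuous_dq).mul hsol.continuous_dq_dq |>.mul
      hsol.continuous_dp |>.add ((continuous_const.sub (hsol.continuous_dq.pow 2)).mul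
      hsol.continuous_dq_dp)).continuousOn
  · exact (hsol.continuous_dp.pow 2).continuousOn
  · exact fun z hz => pow_ne_zero 2 (hsol.hp_pos z.1 z.2 hz.2).ne'

lemma phiQ_zero (hsol : HeightSol ω r h) (q : ℝ) : phiQ ω s h q 0 = 0 := by
  have hA : dq h q 0 = 0 := by
    rw [dq, funext hsol.bot, deriv_const]
  simp [phiQ, hA]

lemma dq_Phi (hsol : HeightSol ω r h) (hω : Continuous ω) (hs : s0 ω < s) {q p : ℝ}
    (hp : p ∈ Icc (0:ℝ) 1) : dq (Phi ω s h) q p = phiQ ω s h q p := by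
  have hsub : uIcc 0 p ⊆ Icc (0:ℝ) 1 := by
    rw [uIcc_of_le hp.1]
    exact Icc_subset_Icc_right hp.2
  have hPQ := hsol.continuousOn_phiPQ hω (s := s)
  have hdiff := hasDerivAt_intervalIntegral_of_continuousOn_deriv (x₀ := q)
    (fun x => (hsol.continuousOn_phiP hω x).mono fun t ht =>
      ⟨Icc_subset_Hdomain hω hs (hsub ht), (hsol.hp_pos x t (hsub ht)).ne'⟩)
    (hPQ.mono (prod_mono subset_rfl hsub))
    (fun x t ht => hsol.hasDerivAt_phiP_fst hω hs (hsub ht) x)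
  rw [dq, show (fun x => Phi ω s h x p) = fun x => ∫ t in (0:ℝ)..p, phiP ω s h x t from rfl,
    hdiff.deriv, intervalIntegral.integral_eq_sub_of_hasDerivAt
      (fun t ht => hsol.hasDerivAt_phiQ_snd hω (hsub ht) q)
      ((hPQ.comp (Continuous.prodMk_right q).continuousOn fun t ht => ⟨mem_univ _, hsub ht⟩)
        |>.intervalIntegrable),
    hsol.phiQ_zero, sub_zero]

end HeightSol

/-- for a solution `h` of the height system, `s > s₀`, `w = h − H(·;s)` and
`Φ = Φ^{(s)}`, the identity
`(Φ_p, −Φ_q) · (w_q, w_p) = −(w_p²/(h_p² H_p) + w_q² H_p/h_p²) w_q` holds on `S`;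
in particular the scalar product is strictly negative wherever `w_q > 0`. -/
theorem stmt15 (ω : ℝ → ℝ) (hω : Continuous ω) (r : ℝ) (h : ℝ → ℝ → ℝ)
    (hsol : HeightSol ω r h)
    (s : ℝ) (hs : s0 ω < s) :
    ∀ q : ℝ, ∀ p ∈ Icc (0:ℝ) 1,
      (dp (Phi ω s h) q p * dq (wfun ω s h) q p
          - dq (Phi ω s h) q p * dp (wfun ω s h) q p =
        -((dp (wfun ω s h) q p) ^ 2 / ((dp h q p) ^ 2 * Hp ω p s)
            + (dq (wfun ω s h) q p) ^ 2 * Hp ω p s / (dp h q p) ^ 2)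
          * dq (wfun ω s h) q p) ∧
      (0 < dq (wfun ω s h) q p →
        dp (Phi ω s h) q p * dq (wfun ω s h) q p
          - dq (Phi ω s h) q p * dp (wfun ω s h) q p < 0) := by
  intro q p hp
  have hg := sq_sub_two_Omeg_pos hω hs hp
  have hB := hsol.hp_pos q p hp
  have hc := Hp_pos hg
  have key : dp (Phi ω s h) q p * dq (wfun ω s h) q p
      - dq (Phi ω s h) q p * dp (wfun ω s h) q p =
      -((dp (wfun ω s h) q p) ^ 2 / ((dp h q p) ^ 2 * Hp ω p s)
          + (dq (wfun ω s h) q p) ^ 2 * Hp ω p s / (dp h q p) ^ 2) * dq (wfun ω s h) q p := by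
    rw [hsol.dp_Phi hω hs hp, hsol.dq_Phi hω hs hp, phiP, phiQ, dq_wfun,
      hsol.dp_wfun hω (Icc_subset_Hdomain hω hs hp), ← inv_inv (s ^ 2 - 2 * Omeg ω p),
      ← Hp_sq hg.le]
    field_simp
    ring
  refine ⟨key, fun hwq => key ▸ mul_neg_of_neg_of_pos (neg_neg_of_pos ?_) hwq⟩
  exact add_pos_of_nonneg_of_pos (div_nonneg (sq_nonneg _) (mul_pos (pow_pos hB 2) hc).le)
    (div_pos (mul_pos (pow_pos hwq 2) hc) (pow_pos hB 2))
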